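/- arXiv:1709.00544 — 6 statements merged into one kernel-verified Lean document; each statement's English description precedes it below -/
import Mathlib

section
/- Let U : ℕ → ℕ be nondecreasing with U(0) = 0 and unbounded. Then the twofold pathwise dual Ũ = (U⁻)⁻ satisfies Ũ(x) = U(x−1) + 1 for every x ≥ 1 (and Ũ(0) = 0). -/
/-- The twofold pathwise dual `Ũ = (U⁻)⁻` of an unbounded reproduction mapping `U`
is a shifted copy of `U`: `Ũ x = U (x-1) + 1` for `x ≥ 1`, and `Ũ 0 = 0`. -/
theorem stmt_4 (U : ℕ → ℕ) (hmono : Monotone U) (h0 : U 0 = 0)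
    (hub : ∀ n : ℕ, ∃ y : ℕ, n ≤ U y)
    (V : ℕ → ℕ) (hV : ∀ x : ℕ, V x = sInf {y : ℕ | x ≤ U y})
    (W : ℕ → ℕ) (hW : ∀ x : ℕ, W x = sInf {y : ℕ | x ≤ V y}) :
    (∀ x : ℕ, 1 ≤ x → W x = U (x - 1) + 1) ∧ W 0 = 0 := by
  have key : ∀ y x : ℕ, 1 ≤ x → (x ≤ V y ↔ U (x - 1) < y) := by
    intro y x hx
    rw [hV]
    constructor
    · intro h
      by_contra hc
      push_neg at hc
      have hle : sInf {z : ℕ | y ≤ U z} ≤ x - 1 := Nat.sInf_le hc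
      omega
    · intro h
      by_contra hc
      push_neg at hc
      have hne : {z : ℕ | y ≤ U z}.Nonempty := by
        obtain ⟨z, hz⟩ := hub y; exact ⟨z, hz⟩
      have hmem : sInf {z : ℕ | y ≤ U z} ∈ {z : ℕ | y ≤ U z} := Nat.sInf_mem hne
      have : U (sInf {z : ℕ | y ≤ U z}) ≤ U (x - 1) := hmono (by omega)
      exact absurd hmem (by simp only [Set.mem_setOf_eq]; omega)
  constructor
  · intro x hx
    rw [hW]
    apply le_antisymm
    · exact Nat.sInf_le (by simp only [Set.mem_setOf_eq]; rw [key _ _ hx]; omega)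
    · have hne : {y : ℕ | x ≤ V y}.Nonempty :=
        ⟨U (x - 1) + 1, by simp only [Set.mem_setOf_eq]; rw [key _ _ hx]; omega⟩
      have hmem := Nat.sInf_mem hne
      simp only [Set.mem_setOf_eq] at hmem
      rw [key _ _ hx] at hmem
      omega
  · rw [hW]
    exact Nat.eq_zero_of_le_zero (Nat.sInf_le (by simp))
end

section
/- Let a < b be integers and let U_a, …, U_{b−1} : ℕ → ℕ be nondecreasing functions with U_t(0) = 0, each unbounded. Set Ũ_t = (U_t⁻)⁻ (the twofold pathwise dual of each mapping). Then for every x ≥ 1, Ũ_{b−1}(Ũ_{b−2}(⋯ Ũ_a(x) ⋯)) = U_{b−1}(U_{b−2}(⋯ U_a(x−1) ⋯)) + 1; that is, the twofold dual system is a shifted copy of the primary system: Ũ_{a,b}(x) = U_{a,b}(x−1) + 1. -/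
/-- Forward composition `U_{a+n-1} ∘ ⋯ ∘ U_a` of a ℤ-indexed family of mappings. -/
def fwdComp (U : ℤ → ℕ → ℕ) (a : ℤ) : ℕ → ℕ → ℕ
  | 0 => id
  | n + 1 => U (a + n) ∘ fwdComp U a n

lemma dual_dual_eq (f : ℕ → ℕ) (hmono : Monotone f)
    (hub : ∀ n : ℕ, ∃ y : ℕ, n ≤ f y)
    (v u : ℕ → ℕ) (hv : ∀ x, v x = sInf {y : ℕ | x ≤ f y})
    (hu : ∀ x, u x = sInf {y : ℕ | x ≤ v y})
    (x : ℕ) (hx : 1 ≤ x) : u x = f (x - 1) + 1 := by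
  have key : ∀ y : ℕ, x ≤ v y ↔ f (x - 1) + 1 ≤ y := by
    intro y
    rw [hv y]
    constructor
    · intro h
      by_contra hc
      push_neg at hc
      have hy : y ≤ f (x - 1) := Nat.lt_succ_iff.mp hc
      have : sInf {z : ℕ | y ≤ f z} ≤ x - 1 := Nat.sInf_le hy
      omega
    · intro h
      obtain ⟨z, hz⟩ := hub y
      have hmem : ({z : ℕ | y ≤ f z}).Nonempty := ⟨z, hz⟩
      apply le_csInf hmem
      intro w hw
      by_contra hc
      push_neg at hc
      have hwle : w ≤ x - 1 := by omega
      have := hmono hwle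
      simp only [Set.mem_setOf_eq] at hw
      omega
  rw [hu x]
  have : {y : ℕ | x ≤ v y} = Set.Ici (f (x - 1) + 1) := by
    ext y; simp [key y, Set.mem_Ici]
  rw [this, csInf_Ici]

/-- **The twofold dual system is a shifted copy of the primary system.** For
integers `a < b`, unbounded reproduction mappings `U_t` with twofold pathwise
duals `Ũ_t = (U_t⁻)⁻`, one has `Ũ_{a,b}(x) = U_{a,b}(x-1) + 1` for every `x ≥ 1`. -/
theorem stmt_8 (a b : ℤ) (hab : a < b) (U : ℤ → ℕ → ℕ)
    (hmono : ∀ t : ℤ, a ≤ t → t < b → Monotone (U t))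
    (h0 : ∀ t : ℤ, a ≤ t → t < b → U t 0 = 0)
    (hub : ∀ t : ℤ, a ≤ t → t < b → ∀ n : ℕ, ∃ y : ℕ, n ≤ U t y)
    (V : ℤ → ℕ → ℕ) (hV : ∀ t : ℤ, ∀ x : ℕ, V t x = sInf {y : ℕ | x ≤ U t y})
    (Ut : ℤ → ℕ → ℕ) (hUt : ∀ t : ℤ, ∀ x : ℕ, Ut t x = sInf {y : ℕ | x ≤ V t y}) :
    ∀ x : ℕ, 1 ≤ x →
      fwdComp Ut a (b - a).toNat x = fwdComp U a (b - a).toNat (x - 1) + 1 := by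
  have main : ∀ n : ℕ, 1 ≤ n → a + n ≤ b → ∀ x : ℕ, 1 ≤ x →
      fwdComp Ut a n x = fwdComp U a n (x - 1) + 1 := by
    intro n
    induction n with
    | zero => omega
    | succ m ih =>
      intro _ hle x hx
      have hta : a ≤ a + m := by omega
      have htb : a + (m : ℤ) < b := by push_cast at hle ⊢; omega
      have hpt : ∀ y : ℕ, 1 ≤ y → Ut (a + m) y = U (a + m) (y - 1) + 1 :=
        fun y hy => dual_dual_eq (U (a + m)) (hmono _ hta htb) (hub _ hta htb)
          (V (a + m)) (Ut (a + m)) (hV (a + m)) (hUt (a + m)) y hy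
      rcases Nat.eq_zero_or_pos m with hm | hm
      · subst hm
        simp only [fwdComp, Function.comp_apply, id_eq, Nat.cast_zero]
        simpa using hpt x hx
      · have ihx := ih hm (by omega) x hx
        simp only [fwdComp, Function.comp_apply]
        rw [ihx, hpt _ (by omega)]
        simp
  have h1 : 1 ≤ (b - a).toNat := by omega
  have h2 : a + ((b - a).toNat : ℤ) ≤ b := by omega
  exact main _ h1 h2
end

section
/- Let (ξ_n)_{n≥1} and (η_n)_{n≥1} be sequences in ℕ, and define offspring numbers u : {1,2,…} → ℕ by: u(S_n) = η_n + 1 where S_n = n + ξ_1 + ⋯ + ξ_n, and u(x) = 0 for all x not of the form S_n; let U(x) = u(1) + ⋯ + u(x) and let v(x) = V(x) − V(x−1) be the offspring numbers of the pathwise dual V = U⁻. Then v has the pattern (ξ_1+1, 0,…,0 (η_1 zeros), ξ_2+1, 0,…,0 (η_2 zeros), …); explicitly, v(T_n) = ξ_n + 1 where T_n = n + η_1 + ⋯ + η_{n−1}, and v(x) = 0 for all x ≥ 1 not of the form T_n. -/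
/-- If the offspring numbers `u` have the pattern
`(0,…,0 (ξ₁ zeros), η₁+1, 0,…,0 (ξ₂ zeros), η₂+1, …)`, i.e. `u(Sₙ) = ηₙ + 1` at
`Sₙ = n + ξ₁ + ⋯ + ξₙ` and `u(x) = 0` elsewhere, then the dual offspring numbers
`v` have the pattern `(ξ₁+1, 0,…,0 (η₁ zeros), ξ₂+1, 0,…,0 (η₂ zeros), …)`, i.e.
`v(Tₙ) = ξₙ + 1` at `Tₙ = n + η₁ + ⋯ + η_{n-1}` and `v(x) = 0` elsewhere. -/
theorem stmt_9 (ξ η : ℕ → ℕ) (u : ℕ → ℕ)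
    (S : ℕ → ℕ) (hS : ∀ n : ℕ, S n = n + ∑ i ∈ Finset.Icc 1 n, ξ i)
    (hu1 : ∀ n : ℕ, 1 ≤ n → u (S n) = η n + 1)
    (hu0 : ∀ x : ℕ, 1 ≤ x → (∀ n : ℕ, 1 ≤ n → x ≠ S n) → u x = 0)
    (U : ℕ → ℕ) (hU : ∀ x : ℕ, U x = ∑ i ∈ Finset.Icc 1 x, u i)
    (V : ℕ → ℕ) (hV : ∀ x : ℕ, V x = sInf {y : ℕ | x ≤ U y})
    (v : ℕ → ℕ) (hv : ∀ x : ℕ, 1 ≤ x → v x = V x - V (x - 1))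
    (T : ℕ → ℕ) (hT : ∀ n : ℕ, T n = n + ∑ i ∈ Finset.Icc 1 (n - 1), η i) :
    (∀ n : ℕ, 1 ≤ n → v (T n) = ξ n + 1) ∧
      (∀ x : ℕ, 1 ≤ x → (∀ n : ℕ, 1 ≤ n → x ≠ T n) → v x = 0) := by
  -- Basic facts about S
  have hS0 : S 0 = 0 := by simp [hS]
  have hSstep : ∀ n : ℕ, S (n + 1) = S n + (ξ (n + 1) + 1) := by
    intro n
    rw [hS, hS, Finset.sum_Icc_succ_top (by omega : 1 ≤ n + 1)]
    ring
  have hSmono : StrictMono S :=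
    strictMono_nat_of_lt_succ (fun n => by rw [hSstep]; omega)
  -- Basic facts about T
  have hT0 : T 0 = 0 := by simp [hT]
  have hT1 : T 1 = 1 := by simp [hT]
  have hTstep : ∀ n : ℕ, 1 ≤ n → T (n + 1) = T n + (η n + 1) := by
    intro n hn
    obtain ⟨m, rfl⟩ : ∃ m, n = m + 1 := ⟨n - 1, by omega⟩
    rw [hT, hT]
    rw [show m + 1 + 1 - 1 = m + 1 by omega, show m + 1 - 1 = m by omega,
      Finset.sum_Icc_succ_top (by omega : 1 ≤ m + 1)]
    ring
  have hTmono : StrictMono T := by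
    apply strictMono_nat_of_lt_succ
    intro n
    rcases Nat.eq_zero_or_pos n with h | h
    · subst h; rw [hT0, hT1]; omega
    · rw [hTstep n h]; omega
  have hTge : ∀ n : ℕ, n ≤ T n := fun n => by rw [hT]; exact Nat.le_add_right _ _
  have hSge : ∀ n : ℕ, n ≤ S n := fun n => by rw [hS]; exact Nat.le_add_right _ _
  -- U is given by sums; flat between S-values
  have hUflat : ∀ m y : ℕ, S m ≤ y → y < S (m + 1) → U y = U (S m) := by
    intro m y h1 h2
    rw [hU, hU]
    apply (Finset.sum_subset (Finset.Icc_subset_Icc_right h1) ?_).symm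
    intro i hi hni
    simp only [Finset.mem_Icc] at hi hni
    apply hu0 i (by omega)
    intro n hn hiSn
    subst hiSn
    have hmn : m < n := hSmono.lt_iff_lt.mp (by omega)
    have : S (m + 1) ≤ S n := hSmono.le_iff_le.mpr (by omega)
    omega
  -- U (S m) + 1 = T (m + 1)
  have hUS : ∀ m : ℕ, U (S m) + 1 = T (m + 1) := by
    intro m
    induction m with
    | zero => rw [hS0, hT1, hU]; simp
    | succ m ih =>
      have hstep := hSstep m
      have hSm1 : S (m + 1) = (S m + ξ (m + 1)) + 1 := by omega
      rw [hU, hSm1, Finset.sum_Icc_succ_top (by omega), ← hU, ← hSm1,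
        hUflat m (S m + ξ (m + 1)) (by omega) (by omega),
        hu1 (m + 1) (by omega), hTstep (m + 1) (by omega), ← ih]
      omega
  -- The index function N
  set N : ℕ → ℕ := fun x => sInf {n | x < T (n + 1)} with hN
  have hNne : ∀ x : ℕ, ({n | x < T (n + 1)} : Set ℕ).Nonempty := by
    intro x
    exact ⟨x, by have := hTge (x + 1); simp only [Set.mem_setOf_eq]; omega⟩
  have hxN : ∀ x : ℕ, x < T (N x + 1) := fun x => Nat.sInf_mem (hNne x)
  have hNle : ∀ x m : ℕ, x < T (m + 1) → N x ≤ m := fun x m h => Nat.sInf_le h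
  -- V x = S (N x)
  have hVN : ∀ x : ℕ, V x = S (N x) := by
    intro x
    have hmem : x ≤ U (S (N x)) := by have := hUS (N x); have := hxN x; omega
    have hlb : ∀ y : ℕ, x ≤ U y → S (N x) ≤ y := by
      intro y hy
      set m := Nat.findGreatest (fun k => S k ≤ y) y with hm
      have hSm : S m ≤ y :=
        Nat.findGreatest_spec (P := fun k => S k ≤ y) (Nat.zero_le y) (by simp [hS0])
      have hy2 : y < S (m + 1) := by
        by_contra h
        push_neg at h
        have h1 : m + 1 ≤ y := le_trans (hSge (m + 1)) h
        exact Nat.findGreatest_is_greatest (P := fun k => S k ≤ y)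
          (lt_add_one m) h1 h
      have hUy : U y = U (S m) := hUflat m y hSm hy2
      have hx' : x < T (m + 1) := by have := hUS m; omega
      exact le_trans (hSmono.le_iff_le.mpr (hNle x m hx')) hSm
    rw [hV]
    have hne : ({y | x ≤ U y} : Set ℕ).Nonempty := ⟨S (N x), hmem⟩
    exact le_antisymm (Nat.sInf_le hmem) (hlb _ (Nat.sInf_mem hne))
  -- Compute N at T n and T n - 1
  have hNT : ∀ n : ℕ, N (T n) = n := by
    intro n
    apply le_antisymm (hNle _ _ (hTmono (by omega)))
    have := hxN (T n)
    have := hTmono.lt_iff_lt.mp this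
    omega
  have hNT1 : ∀ n : ℕ, 1 ≤ n → N (T n - 1) = n - 1 := by
    intro n hn
    have hTn1 : 1 ≤ T n := le_trans hn (hTge n)
    apply le_antisymm
    · apply hNle
      have : T n ≤ T (n - 1 + 1) := hTmono.le_iff_le.mpr (by omega)
      omega
    · have h1 := hxN (T n - 1)
      have h2 : T n ≤ T (N (T n - 1) + 1) := by omega
      have := hTmono.le_iff_le.mp h2
      omega
  constructor
  · intro n hn
    have hTn1 : 1 ≤ T n := le_trans hn (hTge n)
    rw [hv _ hTn1, hVN, hVN, hNT, hNT1 n hn]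
    obtain ⟨k, rfl⟩ : ∃ k, n = k + 1 := ⟨n - 1, by omega⟩
    rw [show k + 1 - 1 = k by omega, hSstep k]
    omega
  · intro x hx hxT
    rw [hv _ hx, hVN, hVN]
    have hNeq : N x = N (x - 1) := by
      apply le_antisymm
      · apply hNle
        have h1 := hxN (x - 1)
        rcases lt_or_eq_of_le (Nat.le_of_pred_lt h1) with h | h
        · exact h
        · exact absurd h (hxT _ (by omega))
      · apply hNle
        have := hxN x
        omega
    rw [hNeq]
    omega
end

section
/- Let (u(x))_{x≥1} be i.i.d. ℕ-valued random variables with P(u(1) = k) = P_k and 0 < P_0 < 1; let U(x) = u(1) + ⋯ + u(x), V(x) = min{y : U(y) ≥ x}, and v(x) = V(x) − V(x−1). Set q̂(x) = P(v(x) ≥ 1). Then q̂(1) = 1 and, for every x ≥ 2, q̂(x) = (1 − P_0)^{−1} · Σ_{k=1}^{x−1} P_k · q̂(x − k). -/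
open MeasureTheory ProbabilityTheory
open scoped ENNReal

/-!
Call `h n` the probability that the walk `U` ever sits exactly at level `n`. Since `u` is
almost surely nonzero infinitely often, `U` is unbounded, and then `v x ≥ 1` exactly when `U`
visits `x - 1`; so `q̂ x = h (x - 1)`. For `n ≥ 1`, `U` visits `n` iff `u 1 = k ≤ n` and the
shifted walk `u 2 + ⋯` visits `n - k`. The shifted sequence is independent of `u 1` and has the
same (product) law as `u`, whence `h n = P₀ h n + ∑_{k=1}^{n} P_k h (n - k)`, and `P₀ < 1` lets
us solve for `h n`.
-/

def partialSumHits (n : ℕ) : Set (ℕ → ℕ) := {a | ∃ y, ∑ i ∈ Finset.range y, a i = n}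

lemma measurableSet_partialSumHits (n : ℕ) : MeasurableSet (partialSumHits n) := by
  simp only [partialSumHits, Set.ofPred_exists]
  exact MeasurableSet.iUnion fun y =>
    (Finset.measurable_sum _ fun i _ => measurable_pi_apply i) (measurableSet_singleton n)

lemma partialSumHits_zero : partialSumHits 0 = Set.univ :=
  Set.eq_univ_of_forall fun _ => ⟨0, Finset.sum_range_zero _⟩

lemma mem_partialSumHits_iff {n : ℕ} (hn : n ≠ 0) {a : ℕ → ℕ} :
    a ∈ partialSumHits n ↔ a 0 ≤ n ∧ (fun i => a (i + 1)) ∈ partialSumHits (n - a 0) := by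
  constructor
  · rintro ⟨_ | y, hy⟩
    · exact absurd hy.symm (by simpa using hn)
    · rw [Finset.sum_range_succ'] at hy
      exact ⟨by omega, y, by simp only; omega⟩
  · rintro ⟨h0, y, hy⟩
    exact ⟨y + 1, by rw [Finset.sum_range_succ', hy]; omega⟩

lemma exists_le_sum_range_of_frequently_ne_zero {a : ℕ → ℕ} (h : ∀ m, ∃ i ≥ m, a i ≠ 0) :
    ∀ n, ∃ y, n ≤ ∑ i ∈ Finset.range y, a i
  | 0 => ⟨0, Nat.zero_le _⟩
  | n + 1 => by
    obtain ⟨y, hy⟩ := exists_le_sum_range_of_frequently_ne_zero h n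
    obtain ⟨i, hiy, hi⟩ := h y
    refine ⟨i + 1, ?_⟩
    have := Finset.sum_le_sum_of_subset (f := a) (Finset.range_subset_range.2 hiy)
    rw [Finset.sum_range_succ]
    omega

lemma sInf_lt_sInf_succ_iff {S : ℕ → ℕ} (hS : Monotone S) (hunb : ∀ n, ∃ y, n ≤ S y) (t : ℕ) :
    sInf {y | t ≤ S y} < sInf {y | t + 1 ≤ S y} ↔ t ∈ Set.range S := by
  have hmem : ∀ s, s ≤ S (sInf {y | s ≤ S y}) := fun s => Nat.sInf_mem (hunb s)
  constructor
  · intro hlt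
    refine ⟨sInf {y | t ≤ S y}, le_antisymm ?_ (hmem t)⟩
    by_contra! h
    exact hlt.not_ge (Nat.sInf_le (Nat.succ_le_of_lt h))
  · rintro ⟨y, rfl⟩
    by_contra! hle
    have hVy : sInf {z | S y ≤ S z} ≤ y := Nat.sInf_le (le_refl (S y))
    have := hS (hle.trans hVy)
    have := hmem (S y + 1)
    omega

namespace ProbabilityTheory

variable {Ω β : Type*} {mΩ : MeasurableSpace Ω} {mβ : MeasurableSpace β} {μ : Measure Ω}
  {X : ℕ → Ω → β}

lemma iIndepFun.indepFun_head_tail (hX : ∀ i, Measurable (X i)) (h : iIndepFun X μ) :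
    IndepFun (X 0) (fun ω i => X (i + 1) ω) μ := by
  have hsplit := indep_iSup_of_disjoint (fun i => (hX i).comap_le) h
    (S := {0}) (T := Set.Ioi 0) (by simp)
  refine indep_of_indep_of_le_right (indep_of_indep_of_le_left hsplit ?_) ?_
  · exact le_iSup₂ (f := fun i (_ : i ∈ ({0} : Set ℕ)) => MeasurableSpace.comap (X i) mβ) 0 rfl
  · have : Measurable[⨆ i ∈ Set.Ioi 0, MeasurableSpace.comap (X i) mβ]
        (fun ω i => X (i + 1) ω) :=
      -- `(_)` lets the σ-algebra on `Ω` be unified with the one above, not synthesized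
      (@measurable_pi_iff _ _ _ (_) _ _).2 fun i => Measurable.of_comap_le <|
        le_iSup₂ (f := fun i (_ : i ∈ Set.Ioi 0) => MeasurableSpace.comap (X i) mβ)
          (i + 1) i.succ_pos
    exact this.comap_le

lemma iIndepFun.map_shift_eq (hX : ∀ i, Measurable (X i)) (h : iIndepFun X μ)
    (hident : ∀ i, μ.map (X i) = μ.map (X 0)) :
    μ.map (fun ω i => X (i + 1) ω) = μ.map (fun ω i => X i ω) := by
  rw [(h.precomp Nat.succ_injective).map_fun_eq_infinitePi_map (fun i => hX (i + 1)),
    h.map_fun_eq_infinitePi_map hX]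
  simp only [hident]

lemma iIndepFun.measure_forall_ge_mem_eq_zero (h : iIndepFun X μ) {s : Set β}
    (hs : MeasurableSet s) {p : ℝ≥0∞} (hp : p < 1) (hXs : ∀ i, μ (X i ⁻¹' s) = p) (m : ℕ) :
    μ {ω | ∀ i ≥ m, X i ω ∈ s} = 0 := by
  have hbound : ∀ k, μ {ω | ∀ i ≥ m, X i ω ∈ s} ≤ p ^ k := fun k =>
    calc μ {ω | ∀ i ≥ m, X i ω ∈ s}
        ≤ μ (⋂ i ∈ Finset.Ico m (m + k), X i ⁻¹' s) :=
          measure_mono fun ω hω => Set.mem_iInter₂.2 fun i hi => hω i (Finset.mem_Ico.1 hi).1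
      _ = p ^ k := by
          rw [h.measure_inter_preimage_eq_mul _ fun _ _ => hs, Finset.prod_congr rfl
            fun i _ => hXs i, Finset.prod_const, Nat.card_Ico, Nat.add_sub_cancel_left]
  exact le_zero_iff.1 (ge_of_tendsto' (ENNReal.tendsto_pow_atTop_nhds_zero_of_lt_one hp) hbound)

lemma iIndepFun.ae_frequently_notMem (h : iIndepFun X μ) {s : Set β}
    (hs : MeasurableSet s) {p : ℝ≥0∞} (hp : p < 1) (hXs : ∀ i, μ (X i ⁻¹' s) = p) :
    ∀ᵐ ω ∂μ, ∀ m, ∃ i ≥ m, X i ω ∉ s := by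
  refine ae_all_iff.2 fun m => ae_iff.2 ?_
  refine measure_mono_null (fun ω hω => ?_) (h.measure_forall_ge_mem_eq_zero hs hp hXs m)
  simpa using hω

end ProbabilityTheory

lemma ENNReal.eq_inv_sub_mul_of_eq_mul_add {a p s : ℝ≥0∞} (ha : a ≠ ∞) (hp : p < 1)
    (h : a = p * a + s) : a = (1 - p)⁻¹ * s := by
  have hs : s = (1 - p) * a := by
    rw [ENNReal.sub_mul fun _ _ => ha, one_mul]
    exact ENNReal.eq_sub_of_add_eq (ENNReal.mul_ne_top hp.ne_top ha) (by rw [add_comm, ← h])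
  rw [hs, ← mul_assoc, ENNReal.inv_mul_cancel (tsub_pos_of_lt hp).ne' (by simp), one_mul]

section Renewal

variable {Ω : Type*} {mΩ : MeasurableSpace Ω} {μ : Measure Ω}
  {X : ℕ → Ω → ℕ} {P : ℕ → ℝ≥0∞}

lemma map_eq_map_zero_of_measure_eq (hX : ∀ i, Measurable (X i))
    (hP : ∀ i k, μ {ω | X i ω = k} = P k) (i : ℕ) : μ.map (X i) = μ.map (X 0) :=
  Measure.ext_of_singleton fun k => by
    rw [Measure.map_apply (hX i) (measurableSet_singleton k),
      Measure.map_apply (hX 0) (measurableSet_singleton k)]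
    exact (hP i k).trans (hP 0 k).symm

lemma measure_partialSumHits_eq_sum (hX : ∀ i, Measurable (X i)) (h : iIndepFun X μ)
    (hP : ∀ i k, μ {ω | X i ω = k} = P k) {n : ℕ} (hn : n ≠ 0) :
    μ {ω | (fun i => X i ω) ∈ partialSumHits n}
      = ∑ k ∈ Finset.range (n + 1), P k * μ {ω | (fun i => X i ω) ∈ partialSumHits (n - k)} := by
  set tail : Ω → ℕ → ℕ := fun ω i => X (i + 1) ω
  have htail : ∀ m,
      μ (tail ⁻¹' partialSumHits m) = μ {ω | (fun i => X i ω) ∈ partialSumHits m} := fun m => by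
    rw [← Measure.map_apply (measurable_pi_lambda _ fun i => hX (i + 1))
      (measurableSet_partialSumHits m), h.map_shift_eq hX (map_eq_map_zero_of_measure_eq hX hP),
      Measure.map_apply (measurable_pi_lambda _ hX) (measurableSet_partialSumHits m)]
    rfl
  have hsplit : {ω | (fun i => X i ω) ∈ partialSumHits n}
      = ⋃ k ∈ Finset.range (n + 1), X 0 ⁻¹' {k} ∩ tail ⁻¹' partialSumHits (n - k) := by
    ext ω
    simp [mem_partialSumHits_iff hn, tail]
  rw [hsplit, measure_biUnion_finset]
  · refine Finset.sum_congr rfl fun k _ => ?_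
    rw [(h.indepFun_head_tail hX).measure_inter_preimage_eq_mul _ _ (measurableSet_singleton k)
      (measurableSet_partialSumHits _), htail]
    exact congrArg (· * _) (hP 0 k)
  · exact fun k _ l _ hkl => Set.disjoint_left.2 fun ω hk hl => hkl (hk.1.symm.trans hl.1)
  · exact fun k _ => (hX 0 (measurableSet_singleton k)).inter
      (measurable_pi_lambda _ (fun i => hX (i + 1)) (measurableSet_partialSumHits _))

lemma measure_partialSumHits_eq_inv_mul_sum (hX : ∀ i, Measurable (X i)) (h : iIndepFun X μ)
    (hP : ∀ i k, μ {ω | X i ω = k} = P k) (hP0 : P 0 < 1) {n : ℕ} (hn : n ≠ 0) :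
    μ {ω | (fun i => X i ω) ∈ partialSumHits n}
      = (1 - P 0)⁻¹ *
          ∑ k ∈ Finset.Icc 1 n, P k * μ {ω | (fun i => X i ω) ∈ partialSumHits (n - k)} := by
  have := h.isProbabilityMeasure
  have hsum := measure_partialSumHits_eq_sum hX h hP hn
  rw [Finset.range_eq_Ico, Finset.sum_eq_sum_Ico_succ_bot (by omega), Nat.sub_zero, zero_add,
    Finset.Ico_add_one_right_eq_Icc] at hsum
  exact ENNReal.eq_inv_sub_mul_of_eq_mul_add (measure_ne_top _ _) hP0 hsum

end Renewal

theorem stmt_12_general {Ω : Type*} [MeasurableSpace Ω] (μ : Measure Ω) [IsProbabilityMeasure μ]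
    (u : ℕ → Ω → ℕ) (hmeas : ∀ x : ℕ, Measurable (u x))
    (hindep : iIndepFun (fun n : ℕ => u (n + 1)) μ)
    (P : ℕ → ℝ≥0∞) (hdist : ∀ x : ℕ, 1 ≤ x → ∀ k : ℕ, μ {ω | u x ω = k} = P k)
    (hP0lt : P 0 < 1)
    (U : Ω → ℕ → ℕ) (hU : ∀ ω : Ω, ∀ x : ℕ, U ω x = ∑ i ∈ Finset.Icc 1 x, u i ω)
    (V : Ω → ℕ → ℕ) (hV : ∀ ω : Ω, ∀ x : ℕ, V ω x = sInf {y : ℕ | x ≤ U ω y})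
    (v : ℕ → Ω → ℕ) (hv : ∀ x : ℕ, 1 ≤ x → ∀ ω : Ω, v x ω = V ω x - V ω (x - 1))
    (qhat : ℕ → ℝ≥0∞) (hq : ∀ x : ℕ, 1 ≤ x → qhat x = μ {ω | 1 ≤ v x ω}) :
    qhat 1 = 1 ∧
      ∀ x : ℕ, 2 ≤ x →
        qhat x = (1 - P 0)⁻¹ * ∑ k ∈ Finset.Icc 1 (x - 1), P k * qhat (x - k) := by
  set X : ℕ → Ω → ℕ := fun n => u (n + 1)
  have hX : ∀ i, Measurable (X i) := fun i => hmeas (i + 1)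
  have hP : ∀ i k, μ {ω | X i ω = k} = P k := fun i k => hdist (i + 1) i.succ_pos k
  have hUX : ∀ ω y, U ω y = ∑ i ∈ Finset.range y, X i ω := fun ω y => by
    rw [hU, ← Finset.Ico_add_one_right_eq_Icc, Finset.sum_Ico_eq_sum_range, Nat.add_sub_cancel]
    simp only [X, add_comm]
  have hunb : ∀ᵐ ω ∂μ, ∀ n, ∃ y, n ≤ U ω y := by
    filter_upwards [hindep.ae_frequently_notMem (measurableSet_singleton 0) hP0lt (hP · 0)]
      with ω hω
    simpa only [hUX] using exists_le_sum_range_of_frequently_ne_zero hω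
  have hqhat : ∀ t, qhat (t + 1) = μ {ω | (fun i => X i ω) ∈ partialSumHits t} := fun t => by
    rw [hq _ (Nat.le_add_left 1 t)]
    refine measure_congr (Filter.eventuallyEq_set.2 (hunb.mono fun ω hω => ?_))
    have hmono : Monotone (U ω) := fun y z hyz => by
      simp only [hUX]
      exact Finset.sum_le_sum_of_subset (Finset.range_subset_range.2 hyz)
    change 1 ≤ v (t + 1) ω ↔ ∃ y, ∑ i ∈ Finset.range y, X i ω = t
    rw [hv _ (Nat.le_add_left 1 t), Nat.add_sub_cancel, hV, hV, Nat.one_le_iff_ne_zero,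
      Nat.sub_ne_zero_iff_lt, sInf_lt_sInf_succ_iff hmono hω]
    simp only [Set.mem_range, hUX]
  refine ⟨by simp [hqhat 0, partialSumHits_zero], fun x hx => ?_⟩
  obtain ⟨n, rfl⟩ : ∃ n, x = n + 1 := ⟨x - 1, by omega⟩
  rw [hqhat n, measure_partialSumHits_eq_inv_mul_sum hX hindep hP hP0lt (by omega),
    Nat.add_sub_cancel]
  refine congrArg _ (Finset.sum_congr rfl fun k hk => ?_)
  rw [show n + 1 - k = (n - k) + 1 by have := (Finset.mem_Icc.1 hk).2; omega, hqhat]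

/-- Recursion for `q̂(x) = P(v(x) ≥ 1)`: `q̂(1) = 1` and, for `x ≥ 2`,
`q̂(x) = (1 - P₀)⁻¹ ∑_{k=1}^{x-1} P_k q̂(x-k)`. -/
theorem stmt_12 {Ω : Type*} [MeasurableSpace Ω] (μ : Measure Ω) [IsProbabilityMeasure μ]
    (u : ℕ → Ω → ℕ) (hmeas : ∀ x : ℕ, Measurable (u x))
    (hindep : iIndepFun (fun n : ℕ => u (n + 1)) μ)
    (P : ℕ → ℝ≥0∞) (hdist : ∀ x : ℕ, 1 ≤ x → ∀ k : ℕ, μ {ω | u x ω = k} = P k)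
    (hP0pos : 0 < P 0) (hP0lt : P 0 < 1)
    (U : Ω → ℕ → ℕ) (hU : ∀ ω : Ω, ∀ x : ℕ, U ω x = ∑ i ∈ Finset.Icc 1 x, u i ω)
    (V : Ω → ℕ → ℕ) (hV : ∀ ω : Ω, ∀ x : ℕ, V ω x = sInf {y : ℕ | x ≤ U ω y})
    (v : ℕ → Ω → ℕ) (hv : ∀ x : ℕ, 1 ≤ x → ∀ ω : Ω, v x ω = V ω x - V ω (x - 1))
    (qhat : ℕ → ℝ≥0∞) (hq : ∀ x : ℕ, 1 ≤ x → qhat x = μ {ω | 1 ≤ v x ω}) :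
    qhat 1 = 1 ∧
      ∀ x : ℕ, 2 ≤ x →
        qhat x = (1 - P 0)⁻¹ * ∑ k ∈ Finset.Icc 1 (x - 1), P k * qhat (x - k) :=
  stmt_12_general μ u hmeas hindep P hdist hP0lt U hU V hV v hv qhat hq
end

section
/- Let (u(x))_{x≥1} be i.i.d. ℕ-valued random variables with P(u(1) = k) = P_k and 0 < P_0 < 1; let U(x) = u(1) + ⋯ + u(x), V(x) = min{y : U(y) ≥ x}, v(x) = V(x) − V(x−1), and q̂(x) = P(v(x) ≥ 1). Let (η_i)_{i≥1} be i.i.d. with P(η_1 = k) = P_{k+1}/(1 − P_0) for k ≥ 0. Then for every x ≥ 1, q̂(x) = Σ_{n=0}^{x−1} P(η_1 + ⋯ + η_n = x − n − 1), where the n = 0 term is the indicator of x = 1. -/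
/-!
Write `f n = u (n + 1)` and `S t = f 0 + ⋯ + f (t - 1)`. By the second Borel–Cantelli lemma
`S` is a.s. unbounded, and then `v (m + 1) ≥ 1` exactly when `S` visits `m`. Splitting the visits
to `s` according to the last one, which is followed by a nonzero step, gives
`P(S visits s) = (1 - P₀) G s` for the Green function `G s = ∑ₜ P(S t = s)`; the renewal equation
for `G` then yields `h (s + 1) = ∑_{k ≤ s} P_{k+1} / (1 - P₀) · h (s - k)`, `h 0 = 1`, for the
hitting probabilities `h`. This recursion only sees the law of the nonzero steps, so `h` is also
the hitting probability of the walk with steps `η + 1`, which never stays put and hence hits `s`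
with probability `∑ₙ P(η₁ + ⋯ + ηₙ + n = s)`.
-/

open MeasureTheory ProbabilityTheory
open scoped ENNReal
open Finset Filter

namespace RenewalWalk

variable {Ω : Type*}

def partialSum (f : ℕ → Ω → ℕ) (t : ℕ) (ω : Ω) : ℕ := ∑ i ∈ range t, f i ω

@[simp]
lemma partialSum_zero (f : ℕ → Ω → ℕ) (ω : Ω) : partialSum f 0 ω = 0 := rfl

lemma partialSum_succ (f : ℕ → Ω → ℕ) (t : ℕ) (ω : Ω) :
    partialSum f (t + 1) ω = partialSum f t ω + f t ω :=
  sum_range_succ _ _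

lemma partialSum_mono (f : ℕ → Ω → ℕ) (ω : Ω) : Monotone (partialSum f · ω) :=
  monotone_nat_of_le_succ fun t => by simp only [partialSum_succ, Nat.le_add_right]

lemma measurable_partialSum [MeasurableSpace Ω] {f : ℕ → Ω → ℕ} (hm : ∀ n, Measurable (f n))
    (t : ℕ) :
    Measurable (partialSum f t) :=
  Finset.measurable_sum _ fun i _ => hm i

lemma sum_Icc_one_eq_partialSum (u : ℕ → Ω → ℕ) (y : ℕ) (ω : Ω) :
    ∑ i ∈ Icc 1 y, u i ω = partialSum (fun n => u (n + 1)) y ω := by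
  rw [partialSum, range_eq_Ico, sum_Ico_add' (fun i => u i ω) 0 y 1, ← Ico_add_one_right_eq_Icc]

lemma partialSum_add_one (f : ℕ → Ω → ℕ) (t : ℕ) (ω : Ω) :
    partialSum (fun n ω => f n ω + 1) t ω = partialSum f t ω + t := by
  simp [partialSum, sum_add_distrib]

lemma exists_le_partialSum_of_frequently {f : ℕ → Ω → ℕ} {ω : Ω}
    (h : ∃ᶠ n in atTop, f n ω ≠ 0) (c : ℕ) : ∃ y, c ≤ partialSum f y ω := by
  induction c with
  | zero => exact ⟨0, Nat.zero_le _⟩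
  | succ c ih =>
    obtain ⟨y, hy⟩ := ih
    obtain ⟨n, hyn, hn⟩ := frequently_atTop.1 h y
    have : partialSum f y ω ≤ partialSum f n ω := partialSum_mono f ω hyn
    exact ⟨n + 1, by rw [partialSum_succ]; omega⟩

lemma exists_partialSum_eq_and_ne_zero_of_lt {f : ℕ → Ω → ℕ} {ω : Ω} {s t y : ℕ}
    (ht : partialSum f t ω = s) (hy : s < partialSum f y ω) :
    ∃ t, partialSum f t ω = s ∧ f t ω ≠ 0 := by
  replace hy : s < partialSum f (t + y) ω := hy.trans_le (partialSum_mono f ω (by omega))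
  induction y generalizing t with
  | zero => exact absurd hy (by rw [add_zero, ht]; exact lt_irrefl s)
  | succ y ih =>
    by_cases h : f t ω = 0
    · exact ih (t := t + 1) (by rw [partialSum_succ, h, ht, add_zero]) (by rwa [add_right_comm])
    · exact ⟨t, ht, h⟩

lemma sInf_lt_sInf_succ_iff {U : ℕ → ℕ} (hU : Monotone U) {m : ℕ} (h : ∃ y, m + 1 ≤ U y) :
    sInf {y | m ≤ U y} < sInf {y | m + 1 ≤ U y} ↔ ∃ y, U y = m := by
  have h₁ : m + 1 ≤ U (sInf {y | m + 1 ≤ U y}) := Nat.sInf_mem h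
  have h₀ : m ≤ U (sInf {y | m ≤ U y}) :=
    Nat.sInf_mem (h.imp fun _ hy => (Nat.le_succ m).trans hy)
  constructor
  · intro hlt
    refine ⟨_, le_antisymm ?_ h₀⟩
    by_contra hgt
    exact Nat.notMem_of_lt_sInf hlt (Nat.succ_le_of_lt (not_le.1 hgt))
  · rintro ⟨t, rfl⟩
    refine (Nat.sInf_le (s := {y | U t ≤ U y}) (le_refl (U t))).trans_lt
      (not_le.1 fun hle => ?_)
    have := hU hle
    omega

section IID

variable [MeasurableSpace Ω] {μ : Measure Ω} {f : ℕ → Ω → ℕ} {w : ℕ → ℝ≥0∞}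

noncomputable def greenFn (μ : Measure Ω) (f : ℕ → Ω → ℕ) (s : ℕ) : ℝ≥0∞ :=
  ∑' t, μ {ω | partialSum f t ω = s}

noncomputable def hitProb (μ : Measure Ω) (f : ℕ → Ω → ℕ) (s : ℕ) : ℝ≥0∞ :=
  μ {ω | ∃ t, partialSum f t ω = s}

lemma indepFun_partialSum (hm : ∀ n, Measurable (f n)) (hi : iIndepFun f μ) (t : ℕ) :
    IndepFun (partialSum f t) (f t) μ := by
  convert hi.indepFun_sum_range_succ hm t using 1
  ext ω
  simp [partialSum]

lemma ae_exists_le_partialSum [IsProbabilityMeasure μ] (hm : ∀ n, Measurable (f n))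
    (hi : iIndepFun f μ) (hlaw : ∀ n k, μ {ω | f n ω = k} = w k) (hw0 : w 0 < 1) :
    ∀ᵐ ω ∂μ, ∀ c, ∃ y, c ≤ partialSum f y ω := by
  set s : ℕ → Set Ω := fun n => f n ⁻¹' {0}ᶜ
  have hs : ∀ n, MeasurableSet (s n) := fun n => hm n (measurableSet_singleton 0).compl
  have hindep : iIndepSet s μ := (iIndepSet_iff_meas_biInter hs).2 fun S =>
    hi.measure_inter_preimage_eq_mul S fun _ _ => (measurableSet_singleton 0).compl
  have hμs : ∀ n, μ (s n) = 1 - w 0 := fun n => by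
    rw [show s n = (f n ⁻¹' {0})ᶜ from rfl,
      prob_compl_eq_one_sub (hm n (measurableSet_singleton 0))]
    exact congrArg _ (hlaw n 0)
  have hlimsup : μ (limsup s atTop) = 1 := by
    refine measure_limsup_eq_one hs hindep ?_
    simp_rw [hμs]
    exact ENNReal.tsum_const_eq_top_of_ne_zero (tsub_pos_of_lt hw0).ne'
  have hae : ∀ᵐ ω ∂μ, ω ∈ limsup s atTop := by
    rw [ae_mem_iff_measure_eq (MeasurableSet.measurableSet_limsup hs).nullMeasurableSet,
      hlimsup, measure_univ]
  filter_upwards [hae] with ω hω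
  exact exists_le_partialSum_of_frequently (mem_limsup_iff_frequently_mem.1 hω)

lemma measure_partialSum_succ_eq (hm : ∀ n, Measurable (f n)) (hi : iIndepFun f μ)
    (hlaw : ∀ n k, μ {ω | f n ω = k} = w k) (t s : ℕ) :
    μ {ω | partialSum f (t + 1) ω = s} =
      ∑ k ∈ range (s + 1), μ {ω | partialSum f t ω = s - k} * w k := by
  have hset : {ω | partialSum f (t + 1) ω = s} =
      ⋃ k ∈ range (s + 1), partialSum f t ⁻¹' {s - k} ∩ f t ⁻¹' {k} := by
    ext ω
    simp only [partialSum_succ, Set.mem_ofPred_eq, Set.mem_iUnion, Set.mem_inter_iff,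
      Set.mem_preimage, Set.mem_singleton_iff, mem_range, exists_prop]
    constructor
    · rintro rfl
      exact ⟨f t ω, by omega, by omega, rfl⟩
    · rintro ⟨k, hk, hS, rfl⟩
      omega
  rw [hset, measure_biUnion_finset]
  · refine sum_congr rfl fun k _ => ?_
    rw [(indepFun_partialSum hm hi t).measure_inter_preimage_eq_mul _ _
      (measurableSet_singleton _) (measurableSet_singleton _), ← hlaw t k]
    rfl
  · exact fun k _ k' _ hkk' => Set.disjoint_left.2 fun ω h h' => hkk' (h.2.symm.trans h'.2)
  · exact fun k _ => (measurable_partialSum hm t (measurableSet_singleton _)).inter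
      (hm t (measurableSet_singleton _))

lemma greenFn_renewal [IsProbabilityMeasure μ] (hm : ∀ n, Measurable (f n)) (hi : iIndepFun f μ)
    (hlaw : ∀ n k, μ {ω | f n ω = k} = w k) (s : ℕ) :
    greenFn μ f s = (if s = 0 then 1 else 0) + ∑ k ∈ range (s + 1), w k * greenFn μ f (s - k) := by
  rw [greenFn, tsum_eq_zero_add' ENNReal.summable]
  congr 1
  · split_ifs with hs <;> simp [hs, eq_comm]
  · simp_rw [measure_partialSum_succ_eq hm hi hlaw]
    rw [Summable.tsum_finsetSum fun _ _ => ENNReal.summable]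
    refine sum_congr rfl fun k _ => ?_
    rw [ENNReal.tsum_mul_right, mul_comm, greenFn]

lemma hitProb_eq_greenFn_mul [IsProbabilityMeasure μ] (hm : ∀ n, Measurable (f n))
    (hi : iIndepFun f μ) (hlaw : ∀ n k, μ {ω | f n ω = k} = w k) (hw0 : w 0 < 1) (s : ℕ) :
    hitProb μ f s = greenFn μ f s * (1 - w 0) := by
  set E : ℕ → Set Ω := fun t => partialSum f t ⁻¹' {s} ∩ f t ⁻¹' {0}ᶜ
  have hEmeas : ∀ t, MeasurableSet (E t) := fun t =>
    (measurable_partialSum hm t (measurableSet_singleton s)).inter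
      (hm t (measurableSet_singleton 0).compl)
  have hE : ∀ t, μ (E t) = μ {ω | partialSum f t ω = s} * (1 - w 0) := fun t => by
    rw [(indepFun_partialSum hm hi t).measure_inter_preimage_eq_mul _ _
      (measurableSet_singleton s) (measurableSet_singleton 0).compl, Set.preimage_compl,
      prob_compl_eq_one_sub (hm t (measurableSet_singleton 0)), ← hlaw t 0]
    rfl
  have hdisj : Pairwise (Function.onFun Disjoint E) := by
    refine (pairwise_disjoint_on E).2 fun t t' hlt => Set.disjoint_left.2 ?_
    rintro ω ⟨(hs : partialSum f t ω = s), (hf : f t ω ≠ 0)⟩ ⟨(hs' : partialSum f t' ω = s), -⟩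
    have := partialSum_mono f ω (Nat.succ_le_of_lt hlt)
    simp only [partialSum_succ] at this
    omega
  have hae : {ω | ∃ t, partialSum f t ω = s} =ᵐ[μ] ⋃ t, E t := by
    refine eventuallyEq_set.2 ?_
    filter_upwards [ae_exists_le_partialSum hm hi hlaw hw0] with ω hω
    simp only [Set.mem_iUnion]
    constructor
    · rintro ⟨t, ht⟩
      obtain ⟨y, hy⟩ := hω (s + 1)
      exact exists_partialSum_eq_and_ne_zero_of_lt ht hy
    · exact fun ⟨t, ht, _⟩ => ⟨t, ht⟩
  rw [hitProb, measure_congr hae, measure_iUnion hdisj hEmeas, greenFn,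
    ← ENNReal.tsum_mul_right]
  exact tsum_congr hE

@[simp]
lemma hitProb_zero [IsProbabilityMeasure μ] : hitProb μ f 0 = 1 := by
  rw [hitProb, show {ω | ∃ t, partialSum f t ω = 0} = Set.univ from
    Set.eq_univ_of_forall fun ω => ⟨0, rfl⟩, measure_univ]

lemma hitProb_succ [IsProbabilityMeasure μ] (hm : ∀ n, Measurable (f n)) (hi : iIndepFun f μ)
    (hlaw : ∀ n k, μ {ω | f n ω = k} = w k) (hw0 : w 0 < 1) (s : ℕ) :
    hitProb μ f (s + 1) = ∑ k ∈ range (s + 1), w (k + 1) / (1 - w 0) * hitProb μ f (s - k) := by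
  have hc₀ : 1 - w 0 ≠ 0 := (tsub_pos_of_lt hw0).ne'
  have hc : 1 - w 0 ≠ ∞ := ENNReal.sub_ne_top ENNReal.one_ne_top
  have hG : greenFn μ f (s + 1) ≠ ∞ := by
    refine fun htop => (measure_lt_top μ {ω | ∃ t, partialSum f t ω = s + 1}).ne ?_
    rw [← hitProb, hitProb_eq_greenFn_mul hm hi hlaw hw0, htop, ENNReal.top_mul hc₀]
  have hrenewal := greenFn_renewal hm hi hlaw (s + 1)
  rw [if_neg (Nat.succ_ne_zero s), zero_add, sum_range_succ', Nat.sub_zero] at hrenewal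
  simp only [Nat.add_sub_add_right] at hrenewal
  calc hitProb μ f (s + 1)
      = greenFn μ f (s + 1) - greenFn μ f (s + 1) * w 0 := by
        rw [hitProb_eq_greenFn_mul hm hi hlaw hw0, ENNReal.mul_sub fun _ _ => hG, mul_one]
    _ = ∑ k ∈ range (s + 1), w (k + 1) * greenFn μ f (s - k) := by
        refine ENNReal.sub_eq_of_eq_add
          (ENNReal.mul_ne_top hG (hw0.trans ENNReal.one_lt_top).ne) ?_
        rw [mul_comm]
        exact hrenewal
    _ = _ := by
        refine sum_congr rfl fun k _ => ?_
        rw [hitProb_eq_greenFn_mul hm hi hlaw hw0, div_eq_mul_inv,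
          show ∀ a b c : ℝ≥0∞, a * c⁻¹ * (b * c) = a * b * (c⁻¹ * c) from
            fun _ _ _ => by ring,
          ENNReal.inv_mul_cancel hc₀ hc, mul_one]

lemma hitProb_eq_of_law {Ω' : Type*} [MeasurableSpace Ω'] {μ' : Measure Ω'} {g : ℕ → Ω' → ℕ}
    {w' : ℕ → ℝ≥0∞} [IsProbabilityMeasure μ] [IsProbabilityMeasure μ']
    (hm : ∀ n, Measurable (f n)) (hi : iIndepFun f μ) (hlaw : ∀ n k, μ {ω | f n ω = k} = w k)
    (hw0 : w 0 < 1) (hm' : ∀ n, Measurable (g n)) (hi' : iIndepFun g μ')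
    (hlaw' : ∀ n k, μ' {ω | g n ω = k} = w' k) (hw0' : w' 0 < 1)
    (hw : ∀ k, w (k + 1) / (1 - w 0) = w' (k + 1) / (1 - w' 0)) :
    hitProb μ f = hitProb μ' g := by
  funext s
  induction s using Nat.strong_induction_on with
  | _ s ih =>
    cases s with
    | zero => rw [hitProb_zero, hitProb_zero]
    | succ s =>
      rw [hitProb_succ hm hi hlaw hw0, hitProb_succ hm' hi' hlaw' hw0']
      exact sum_congr rfl fun k _ => by rw [hw, ih (s - k) (by omega)]

lemma measure_sInf_lt_sInf_succ [IsProbabilityMeasure μ] (hm : ∀ n, Measurable (f n))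
    (hi : iIndepFun f μ) (hlaw : ∀ n k, μ {ω | f n ω = k} = w k) (hw0 : w 0 < 1) (m : ℕ) :
    μ {ω | sInf {y | m ≤ partialSum f y ω} < sInf {y | m + 1 ≤ partialSum f y ω}} =
      hitProb μ f m := by
  refine measure_congr (eventuallyEq_set.2 ?_)
  filter_upwards [ae_exists_le_partialSum hm hi hlaw hw0] with ω hω
  exact sInf_lt_sInf_succ_iff (partialSum_mono f ω) (hω (m + 1))

lemma greenFn_add_one (μ : Measure Ω) (g : ℕ → Ω → ℕ) (m : ℕ) :
    greenFn μ (fun n ω => g n ω + 1) m =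
      ∑ n ∈ range (m + 1), μ {ω | partialSum g n ω = m - n} := by
  rw [greenFn, tsum_eq_sum (s := range (m + 1))]
  · refine sum_congr rfl fun n hn => congrArg μ (Set.ext fun ω => ?_)
    have := mem_range.1 hn
    simp only [Set.mem_ofPred_eq, partialSum_add_one]
    omega
  · intro n hn
    refine measure_mono_null (fun ω (hω : partialSum _ n ω = m) => ?_) measure_empty
    rw [partialSum_add_one] at hω
    exact absurd (mem_range.2 (by omega)) hn

/-- The walk with steps `g + 1` never stays put, so its hitting probabilities are its Green
function, and its steps have the law of the nonzero steps of `f`. -/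
lemma hitProb_eq_sum_partialSum {Ω' : Type*} [MeasurableSpace Ω'] {μ' : Measure Ω'}
    {g : ℕ → Ω' → ℕ} [IsProbabilityMeasure μ] [IsProbabilityMeasure μ']
    (hm : ∀ n, Measurable (f n)) (hi : iIndepFun f μ) (hlaw : ∀ n k, μ {ω | f n ω = k} = w k)
    (hw0 : w 0 < 1) (hm' : ∀ n, Measurable (g n)) (hi' : iIndepFun g μ')
    (hlaw' : ∀ n k, μ' {ω | g n ω = k} = w (k + 1) / (1 - w 0)) (m : ℕ) :
    hitProb μ f m = ∑ n ∈ range (m + 1), μ' {ω | partialSum g n ω = m - n} := by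
  set ξ : ℕ → Ω' → ℕ := fun n ω => g n ω + 1
  set w' : ℕ → ℝ≥0∞ := fun k => if k = 0 then 0 else w k / (1 - w 0)
  have hw'0 : w' 0 = 0 := if_pos rfl
  have hξm : ∀ n, Measurable (ξ n) := fun n => (hm' n).add_const 1
  have hξi : iIndepFun ξ μ' := hi'.comp (fun _ k => k + 1) fun _ => measurable_of_countable _
  have hξlaw : ∀ n k, μ' {ω | ξ n ω = k} = w' k := by
    rintro n (_ | k)
    · simp [ξ, w']
    · simpa [ξ, w'] using hlaw' n k
  calc hitProb μ f m
      = hitProb μ' ξ m :=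
        congrFun (hitProb_eq_of_law hm hi hlaw hw0 hξm hξi hξlaw (by simp [hw'0])
          fun k => by simp [w']) m
    _ = greenFn μ' ξ m := by
        rw [hitProb_eq_greenFn_mul hξm hξi hξlaw (by simp [hw'0]), hw'0, tsub_zero, mul_one]
    _ = _ := greenFn_add_one μ' g m

end IID

end RenewalWalk

open RenewalWalk in
theorem stmt_13_general {Ω : Type*} [MeasurableSpace Ω] (μ : Measure Ω) [IsProbabilityMeasure μ]
    (u : ℕ → Ω → ℕ) (hmeas : ∀ x : ℕ, Measurable (u x))
    (hindep : iIndepFun (fun n : ℕ => u (n + 1)) μ)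
    (P : ℕ → ℝ≥0∞) (hdist : ∀ x : ℕ, 1 ≤ x → ∀ k : ℕ, μ {ω | u x ω = k} = P k)
    (hP0lt : P 0 < 1)
    (U : Ω → ℕ → ℕ) (hU : ∀ ω : Ω, ∀ x : ℕ, U ω x = ∑ i ∈ Finset.Icc 1 x, u i ω)
    (V : Ω → ℕ → ℕ) (hV : ∀ ω : Ω, ∀ x : ℕ, V ω x = sInf {y : ℕ | x ≤ U ω y})
    (v : ℕ → Ω → ℕ) (hv : ∀ x : ℕ, 1 ≤ x → ∀ ω : Ω, v x ω = V ω x - V ω (x - 1))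
    (qhat : ℕ → ℝ≥0∞) (hq : ∀ x : ℕ, 1 ≤ x → qhat x = μ {ω | 1 ≤ v x ω})
    {Ω' : Type*} [MeasurableSpace Ω'] (μ' : Measure Ω') [IsProbabilityMeasure μ']
    (η : ℕ → Ω' → ℕ) (hηmeas : ∀ n : ℕ, Measurable (η n))
    (hηindep : iIndepFun (fun n : ℕ => η (n + 1)) μ')
    (hηdist : ∀ n : ℕ, 1 ≤ n → ∀ k : ℕ, μ' {ω | η n ω = k} = P (k + 1) / (1 - P 0)) :
    ∀ x : ℕ, 1 ≤ x →
      qhat x =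
        ∑ n ∈ Finset.range x, μ' {ω | ∑ i ∈ Finset.Icc 1 n, η i ω = x - n - 1} := by
  intro x hx
  obtain ⟨m, rfl⟩ : ∃ m, x = m + 1 := ⟨x - 1, by omega⟩
  set f : ℕ → Ω → ℕ := fun n => u (n + 1)
  have hm : ∀ n, Measurable (f n) := fun n => hmeas (n + 1)
  have hlaw : ∀ n k, μ {ω | f n ω = k} = P k := fun n k => hdist (n + 1) (by omega) k
  have hlhs : qhat (m + 1) = hitProb μ f m := by
    rw [hq _ hx, ← measure_sInf_lt_sInf_succ hm hindep hlaw hP0lt]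
    congr with ω
    simp only [hv _ hx, hV, hU, sum_Icc_one_eq_partialSum,
      Nat.add_sub_cancel, Nat.one_le_iff_ne_zero, Nat.sub_ne_zero_iff_lt]
    rfl
  rw [hlhs, hitProb_eq_sum_partialSum hm hindep hlaw hP0lt (fun n => hηmeas (n + 1))
    hηindep fun n => hηdist (n + 1) (by omega)]
  simp only [sum_Icc_one_eq_partialSum, Nat.sub_sub, Nat.add_sub_add_right]

/-- Representation of `q̂(x) = P(v(x) ≥ 1)` in terms of an i.i.d. sequence
`(ηᵢ)` with `P(η₁ = k) = P_{k+1}/(1 - P₀)`: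
`q̂(x) = ∑_{n=0}^{x-1} P(η₁ + ⋯ + ηₙ = x - n - 1)`. -/
theorem stmt_13 {Ω : Type*} [MeasurableSpace Ω] (μ : Measure Ω) [IsProbabilityMeasure μ]
    (u : ℕ → Ω → ℕ) (hmeas : ∀ x : ℕ, Measurable (u x))
    (hindep : iIndepFun (fun n : ℕ => u (n + 1)) μ)
    (P : ℕ → ℝ≥0∞) (hdist : ∀ x : ℕ, 1 ≤ x → ∀ k : ℕ, μ {ω | u x ω = k} = P k)
    (hP0pos : 0 < P 0) (hP0lt : P 0 < 1)
    (U : Ω → ℕ → ℕ) (hU : ∀ ω : Ω, ∀ x : ℕ, U ω x = ∑ i ∈ Finset.Icc 1 x, u i ω)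
    (V : Ω → ℕ → ℕ) (hV : ∀ ω : Ω, ∀ x : ℕ, V ω x = sInf {y : ℕ | x ≤ U ω y})
    (v : ℕ → Ω → ℕ) (hv : ∀ x : ℕ, 1 ≤ x → ∀ ω : Ω, v x ω = V ω x - V ω (x - 1))
    (qhat : ℕ → ℝ≥0∞) (hq : ∀ x : ℕ, 1 ≤ x → qhat x = μ {ω | 1 ≤ v x ω})
    {Ω' : Type*} [MeasurableSpace Ω'] (μ' : Measure Ω') [IsProbabilityMeasure μ']
    (η : ℕ → Ω' → ℕ) (hηmeas : ∀ n : ℕ, Measurable (η n))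
    (hηindep : iIndepFun (fun n : ℕ => η (n + 1)) μ')
    (hηdist : ∀ n : ℕ, 1 ≤ n → ∀ k : ℕ, μ' {ω | η n ω = k} = P (k + 1) / (1 - P 0)) :
    ∀ x : ℕ, 1 ≤ x →
      qhat x =
        ∑ n ∈ Finset.range x, μ' {ω | ∑ i ∈ Finset.Icc 1 n, η i ω = x - n - 1} :=
  stmt_13_general μ u hmeas hindep P hdist hP0lt U hU V hV v hv qhat hq μ' η hηmeas hηindep hηdist
end

section
/- Let p, q ∈ (0,1] and let (u(x))_{x≥1} be i.i.d. ℕ-valued random variables with the linear-fractional law P(u(1) = 0) = 1 − q and P(u(1) = k) = q (1 − p)^{k−1} p for k ≥ 1. Let v(x) be the dual offspring numbers. Then v(1), v(2), v(3), … are mutually independent, P(v(1) = k) = (1 − q)^{k−1} q for k ≥ 1, and for every x ≥ 2: P(v(x) = 0) = 1 − p and P(v(x) = k) = p (1 − q)^{k−1} q for k ≥ 1. In particular, the dual is a Galton–Watson reproduction with an eternal particle: v(1) ≥ 1 a.s. and v(2), v(3), … are identically distributed. -/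
open MeasureTheory ProbabilityTheory Finset Filter
open scoped ENNReal

/-!
Write `x i = u (i + 1)` for the offspring numbers and `a j = v (j + 1)` for candidate dual
values. Outside the null event that the walk `∑ i < y, x i` stays bounded, `v (j + 1) = a j`
for `j < n` means that each level `j ≤ n` is first reached at time `a 0 + ⋯ + a (j - 1)`.
Together with the overshoot `m` of the walk above level `n` at that time, this event pins down
every `x i` before that time: if `a n = 0`, level `n + 1` was already passed by the overshoot;
if `a n = B + 1`, the walk makes `B` zero steps and then a jump `m' + 1`, `m'` being the new
overshoot. Such a jump has probability `q (1 - p) ^ m' * p`, so the overshoot after each record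
is geometric with parameter `p` and forgets the past, and by independence of the `x i` the event
has probability `(∏ j < n, dualLaw p q j (a j)) * (1 - p) ^ m * p`. Summing over `m` gives
product formulas for all cylinders of `v`, hence independence and the marginals.
-/

noncomputable def linFrac (p q : ℝ≥0∞) : ℕ → ℝ≥0∞
  | 0 => 1 - q
  | k + 1 => q * (1 - p) ^ k * p

/-- `dualLaw p q j` is the law of `v (j + 1)`: the dual of `linFrac p q` is `linFrac q p`,
except that the first dual offspring number is at least one. -/
noncomputable def dualLaw (p q : ℝ≥0∞) : ℕ → ℕ → ℝ≥0∞
  | 0 => linFrac q 1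
  | _ + 1 => linFrac q p

section LinearFractional

variable {p q : ℝ≥0∞}

lemma tsum_one_sub_pow_mul_self (hp0 : 0 < p) (hp1 : p ≤ 1) : ∑' k : ℕ, (1 - p) ^ k * p = 1 := by
  rw [ENNReal.tsum_mul_right, ENNReal.tsum_geometric, ENNReal.sub_sub_cancel ENNReal.one_ne_top hp1,
    ENNReal.inv_mul_cancel hp0.ne' (hp1.trans_lt ENNReal.one_lt_top).ne]

lemma hasSum_linFrac (hp0 : 0 < p) (hp1 : p ≤ 1) (hq1 : q ≤ 1) : HasSum (linFrac p q) 1 := by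
  rw [ENNReal.summable.hasSum_iff, tsum_eq_zero_add' ENNReal.summable]
  simp only [linFrac, mul_assoc, ENNReal.tsum_mul_left, tsum_one_sub_pow_mul_self hp0 hp1, mul_one]
  exact tsub_add_cancel_of_le hq1

lemma hasSum_dualLaw (hp1 : p ≤ 1) (hq0 : 0 < q) (hq1 : q ≤ 1) (j : ℕ) :
    HasSum (dualLaw p q j) 1 := by
  cases j with
  | zero => exact hasSum_linFrac hq0 hq1 le_rfl
  | succ j => exact hasSum_linFrac hq0 hq1 hp1

end LinearFractional

section FirstPassage

/-- The paper's `V`; it is `0` when level `k` is never reached. -/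
noncomputable def firstPassage (s : ℕ → ℕ) (k : ℕ) : ℕ := sInf {y | k ≤ s y}

def IsFirstPassage (s : ℕ → ℕ) (k y : ℕ) : Prop := k ≤ s y ∧ ∀ z < y, s z < k

variable {s : ℕ → ℕ} {k y : ℕ}

lemma IsFirstPassage.firstPassage_eq (h : IsFirstPassage s k y) : firstPassage s k = y :=
  le_antisymm (Nat.sInf_le h.1)
    (le_csInf ⟨y, h.1⟩ fun z hz => not_lt.1 fun hzy => (h.2 z hzy).not_ge hz)

lemma isFirstPassage_firstPassage (h : ∃ y, k ≤ s y) : IsFirstPassage s k (firstPassage s k) :=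
  ⟨Nat.sInf_mem h, fun _ hz => not_le.1 (Nat.notMem_of_lt_sInf (s := {y | k ≤ s y}) hz)⟩

lemma firstPassage_eq_iff (h : ∃ y, k ≤ s y) : firstPassage s k = y ↔ IsFirstPassage s k y :=
  ⟨fun hy => hy ▸ isFirstPassage_firstPassage h, IsFirstPassage.firstPassage_eq⟩

lemma firstPassage_zero : firstPassage s 0 = 0 :=
  Nat.sInf_eq_zero.2 (Or.inl (Nat.zero_le _))

lemma monotone_firstPassage (h : ∀ k, ∃ y, k ≤ s y) : Monotone (firstPassage s) :=
  fun _ k' hk => le_csInf (h k') fun _ hy => Nat.sInf_le (hk.trans hy)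

lemma measurable_firstPassage {Ω : Type*} [MeasurableSpace Ω] {S : Ω → ℕ → ℕ}
    (hS : ∀ y, Measurable fun ω => S ω y) (hmono : ∀ ω, Monotone (S ω)) (k : ℕ) :
    Measurable fun ω => firstPassage (S ω) k := by
  refine measurable_to_countable' fun y => ?_
  cases y with
  | zero =>
    have : (fun ω => firstPassage (S ω) k) ⁻¹' {0} = {ω | k ≤ S ω 0} ∪ ⋂ y, {ω | S ω y < k} := by
      ext ω; simp [firstPassage, Nat.sInf_eq_zero, Set.eq_empty_iff_forall_notMem]
    rw [this]
    exact (measurableSet_le measurable_const (hS 0)).union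
      (.iInter fun y => measurableSet_lt (hS y) measurable_const)
  | succ y =>
    have : (fun ω => firstPassage (S ω) k) ⁻¹' {y + 1} =
        {ω | k ≤ S ω (y + 1)} ∩ {ω | S ω y < k} := by
      ext ω
      rw [Set.mem_preimage, Set.mem_singleton_iff, firstPassage,
        Nat.sInf_upward_closed_eq_succ_iff (s := {y | k ≤ S ω y})
          fun _ _ h h' => h'.trans (hmono ω h)]
      simp
    rw [this]
    exact (measurableSet_le measurable_const (hS _)).inter
      (measurableSet_lt (hS y) measurable_const)

end FirstPassage

lemma forall_le_eq_sum_range_iff {f a : ℕ → ℕ} (hf : Monotone f) (hf0 : f 0 = 0) (n : ℕ) :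
    (∀ j ≤ n, f j = ∑ i ∈ range j, a i) ↔ ∀ j < n, f (j + 1) - f j = a j := by
  constructor
  · intro h j hj
    rw [h (j + 1) hj, h j hj.le, sum_range_succ, add_tsub_cancel_left]
  · intro h j hj
    rw [← tsub_zero (f j), ← hf0, ← sum_range_tsub hf]
    exact sum_congr rfl fun i hi => h i ((mem_range.1 hi).trans_le hj)

lemma monotone_sum_range (x : ℕ → ℕ) : Monotone fun y => ∑ i ∈ range y, x i :=
  fun _ _ h => sum_le_sum_of_subset (range_subset_range.2 h)

lemma exists_le_sum_range_of_frequently_ne_zero_s14 {x : ℕ → ℕ} (hx : ∃ᶠ i in atTop, x i ≠ 0)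
    (k : ℕ) : ∃ y, k ≤ ∑ i ∈ range y, x i := by
  induction k with
  | zero => exact ⟨0, Nat.zero_le _⟩
  | succ k ih =>
    obtain ⟨y, hy⟩ := ih
    obtain ⟨i, hyi, hi⟩ := frequently_atTop.1 hx y
    refine ⟨i + 1, ?_⟩
    have : ∑ j ∈ range y, x j ≤ ∑ j ∈ range i, x j := monotone_sum_range x hyi
    rw [sum_range_succ]
    omega

lemma exists_cylinder_append {M : Type*} [CommMonoid M] (ρ : ℕ → M) (K B m : ℕ) (e : ℕ → ℕ) :
    ∃ e' : ℕ → ℕ, (∀ x : ℕ → ℕ, (∀ i < K + B + 1, x i = e' i) ↔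
        (∀ i < K, x i = e i) ∧ (∀ i < B, x (K + i) = 0) ∧ x (K + B) = m + 1) ∧
      ∏ i ∈ range (K + B + 1), ρ (e' i) = (∏ i ∈ range K, ρ (e i)) * ρ 0 ^ B * ρ (m + 1) := by
  refine ⟨fun i => if i < K then e i else if i < K + B then 0 else m + 1, fun x => ?_, ?_⟩
  · constructor
    · intro h
      refine ⟨fun i hi => ?_, fun i hi => ?_, ?_⟩
      · simpa [hi] using h i (by omega)
      · simpa [hi] using h (K + i) (by omega)
      · simpa using h (K + B) (by omega)
    · rintro ⟨h1, h2, h3⟩ i hi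
      dsimp only
      split_ifs with hK hKB
      · exact h1 i hK
      · obtain ⟨j, rfl⟩ := Nat.exists_eq_add_of_le (not_lt.1 hK)
        exact h2 j (by omega)
      · obtain rfl : i = K + B := by omega
        exact h3
  · have hK : ∀ i ∈ range K, ρ (if i < K then e i else if i < K + B then 0 else m + 1) = ρ (e i) :=
      fun i hi => by rw [if_pos (mem_range.1 hi)]
    have hB : ∀ i ∈ range B,
        ρ (if K + i < K then e (K + i) else if K + i < K + B then 0 else m + 1) = ρ 0 :=
      fun i hi => by rw [if_neg (by omega), if_pos (by simpa using hi)]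
    rw [prod_range_succ, prod_range_add, prod_congr rfl hK, prod_congr rfl hB]
    simp

section Duality

def IsDualPrefix (x a : ℕ → ℕ) (n : ℕ) : Prop :=
  ∀ j ≤ n, IsFirstPassage (fun y => ∑ i ∈ range y, x i) j (∑ i ∈ range j, a i)

/-- `dualOffspring x j` is `v (j + 1)` for the offspring numbers `u (i + 1) = x i`. -/
noncomputable def dualOffspring (x : ℕ → ℕ) (j : ℕ) : ℕ :=
  firstPassage (fun y => ∑ i ∈ range y, x i) (j + 1) - firstPassage (fun y => ∑ i ∈ range y, x i) j

lemma dualOffspring_eq_sInf_sub_sInf (u : ℕ → ℕ) (j : ℕ) :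
    dualOffspring (fun i => u (i + 1)) j =
      sInf {y | j + 1 ≤ ∑ i ∈ Icc 1 y, u i} - sInf {y | j ≤ ∑ i ∈ Icc 1 y, u i} := by
  have h : ∀ y, ∑ i ∈ Icc 1 y, u i = ∑ i ∈ range y, u (i + 1) := fun y => by
    rw [← Ico_add_one_right_eq_Icc, sum_Ico_eq_sum_range, add_tsub_cancel_right]
    simp only [add_comm]
  simp only [h]
  rfl

variable {x a : ℕ → ℕ} {n m : ℕ}

lemma isDualPrefix_iff (hx : ∀ k, ∃ y, k ≤ ∑ i ∈ range y, x i) :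
    IsDualPrefix x a n ↔ ∀ j < n, dualOffspring x j = a j := by
  simp only [dualOffspring]
  rw [← forall_le_eq_sum_range_iff (monotone_firstPassage hx) firstPassage_zero]
  exact forall₂_congr fun j _ => (firstPassage_eq_iff (hx j)).symm

lemma isDualPrefix_zero : IsDualPrefix x a 0 := by
  intro j hj
  obtain rfl := Nat.le_zero.1 hj
  simp [IsFirstPassage]

lemma isDualPrefix_succ :
    IsDualPrefix x a (n + 1) ↔ IsDualPrefix x a n ∧
      IsFirstPassage (fun y => ∑ i ∈ range y, x i) (n + 1) (∑ i ∈ range (n + 1), a i) := by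
  simp only [IsDualPrefix, Nat.le_succ_iff, or_imp, forall_and, forall_eq]

lemma not_isDualPrefix_of_eq_zero (ha : a 0 = 0) (hn : n ≠ 0) : ¬ IsDualPrefix x a n := fun h => by
  simpa [IsFirstPassage, ha] using (h 1 (Nat.one_le_iff_ne_zero.2 hn)).1

lemma IsDualPrefix.le_sum (h : IsDualPrefix x a n) :
    n ≤ ∑ i ∈ range (∑ j ∈ range n, a j), x i :=
  (h n le_rfl).1

lemma isDualPrefix_succ_and_sum_eq_iff_of_eq_zero (ha : a n = 0) :
    (IsDualPrefix x a (n + 1) ∧ ∑ i ∈ range (∑ j ∈ range (n + 1), a j), x i = n + 1 + m) ↔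
      IsDualPrefix x a n ∧ ∑ i ∈ range (∑ j ∈ range n, a j), x i = n + (m + 1) := by
  rw [isDualPrefix_succ, sum_range_succ, ha, add_zero]
  simp only [IsFirstPassage]
  constructor
  · rintro ⟨⟨h, -⟩, hs⟩
    exact ⟨h, by omega⟩
  · rintro ⟨h, hs⟩
    exact ⟨⟨h, by omega, fun z hz => ((h n le_rfl).2 z hz).trans (Nat.lt_succ_self n)⟩, by omega⟩

lemma isDualPrefix_succ_and_sum_eq_iff_of_eq_succ {B : ℕ} (ha : a n = B + 1) :
    (IsDualPrefix x a (n + 1) ∧ ∑ i ∈ range (∑ j ∈ range (n + 1), a j), x i = n + 1 + m) ↔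
      (IsDualPrefix x a n ∧ ∑ i ∈ range (∑ j ∈ range n, a j), x i = n) ∧
        (∀ i < B, x (∑ j ∈ range n, a j + i) = 0) ∧ x (∑ j ∈ range n, a j + B) = m + 1 := by
  have hsplit := sum_range_add x (∑ j ∈ range n, a j) B
  have hlast := sum_range_succ x (∑ j ∈ range n, a j + B)
  rw [isDualPrefix_succ, sum_range_succ, ha, ← add_assoc]
  simp only [IsFirstPassage]
  constructor
  · rintro ⟨⟨h, -, hlt⟩, hs⟩
    have hK := h.le_sum
    have hKB := hlt (∑ j ∈ range n, a j + B) (Nat.lt_succ_self _)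
    have hzero : ∑ i ∈ range B, x (∑ j ∈ range n, a j + i) = 0 := by omega
    exact ⟨⟨h, by omega⟩, fun i hi => sum_eq_zero_iff.1 hzero i (mem_range.2 hi), by omega⟩
  · rintro ⟨⟨h, hK⟩, hzero, hx⟩
    have : ∑ i ∈ range B, x (∑ j ∈ range n, a j + i) = 0 :=
      sum_eq_zero fun i hi => hzero i (mem_range.1 hi)
    refine ⟨⟨h, by omega, fun z hz => ?_⟩, by omega⟩
    have : ∑ i ∈ range z, x i ≤ ∑ i ∈ range (∑ j ∈ range n, a j + B), x i :=
      monotone_sum_range x (Nat.lt_succ_iff.1 hz)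
    omega

variable {p q : ℝ≥0∞}

theorem exists_cylinder_isDualPrefix {a : ℕ → ℕ} (ha : a 0 ≠ 0) (n m : ℕ) :
    ∃ e : ℕ → ℕ, (∀ x : ℕ → ℕ,
        (IsDualPrefix x a (n + 1) ∧ ∑ i ∈ range (∑ j ∈ range (n + 1), a j), x i = n + 1 + m) ↔
          ∀ i < ∑ j ∈ range (n + 1), a j, x i = e i) ∧
      ∏ i ∈ range (∑ j ∈ range (n + 1), a j), linFrac p q (e i) =
        (∏ j ∈ range (n + 1), dualLaw p q j (a j)) * ((1 - p) ^ m * p) := by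
  induction n generalizing m with
  | zero =>
    obtain ⟨B, hB⟩ := Nat.exists_eq_add_one_of_ne_zero ha
    obtain ⟨e, he, hprod⟩ := exists_cylinder_append (linFrac p q) (∑ j ∈ range 0, a j) B m id
    refine ⟨e, fun x => ?_, ?_⟩
    · rw [isDualPrefix_succ_and_sum_eq_iff_of_eq_succ hB, sum_range_succ _ 0, hB, ← add_assoc, he]
      simp [isDualPrefix_zero]
    · rw [sum_range_succ _ 0, hB, ← add_assoc, hprod]
      simp [dualLaw, linFrac, hB]
      ring
  | succ n ih =>
    by_cases h0 : a (n + 1) = 0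
    · obtain ⟨e, he, hprod⟩ := ih (m + 1)
      refine ⟨e, fun x => ?_, ?_⟩
      · rw [isDualPrefix_succ_and_sum_eq_iff_of_eq_zero h0, he, sum_range_succ _ (n + 1), h0,
          add_zero]
      · rw [sum_range_succ _ (n + 1), h0, add_zero, hprod, prod_range_succ _ (n + 1), h0]
        simp only [dualLaw, linFrac]
        ring
    · obtain ⟨B, hB⟩ := Nat.exists_eq_add_one_of_ne_zero h0
      obtain ⟨e₀, he₀, hprod₀⟩ := ih 0
      simp only [add_zero] at he₀
      obtain ⟨e, he, hprod⟩ :=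
        exists_cylinder_append (linFrac p q) (∑ j ∈ range (n + 1), a j) B m e₀
      refine ⟨e, fun x => ?_, ?_⟩
      · rw [isDualPrefix_succ_and_sum_eq_iff_of_eq_succ hB, he₀, sum_range_succ _ (n + 1), hB,
          ← add_assoc, he]
      · rw [sum_range_succ _ (n + 1), hB, ← add_assoc, hprod, hprod₀, prod_range_succ _ (n + 1), hB]
        simp only [dualLaw, linFrac]
        ring

end Duality

lemma ProbabilityTheory.iIndepFun.measure_forall_lt_eq {Ω β : Type*} [MeasurableSpace Ω]
    [MeasurableSpace β] [MeasurableSingletonClass β] {μ : Measure Ω} {Y : ℕ → Ω → β}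
    (hY : iIndepFun Y μ) (n : ℕ) (b : ℕ → β) :
    μ {ω | ∀ i < n, Y i ω = b i} = ∏ i ∈ range n, μ {ω | Y i ω = b i} := by
  have : {ω | ∀ i < n, Y i ω = b i} = ⋂ i ∈ range n, {ω | Y i ω = b i} := by ext; simp
  rw [this]
  exact hY.meas_biInter fun i _ => ⟨{b i}, measurableSet_singleton _, rfl⟩

section CylinderLaw

variable {Ω β : Type*} [MeasurableSpace Ω] [MeasurableSpace β] [Countable β]
  [MeasurableSingletonClass β] {μ : Measure Ω} {Y : ℕ → Ω → β} {π : ℕ → PMF β}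

lemma map_range_eq_pi_of_cylinder (hY : ∀ i, Measurable (Y i))
    (h : ∀ n (b : ℕ → β), μ {ω | ∀ i < n, Y i ω = b i} = ∏ i ∈ range n, π i (b i)) (n : ℕ) :
    μ.map (fun ω (i : range n) => Y i ω) = Measure.pi fun i : range n => (π i).toMeasure := by
  obtain ⟨b₀, -⟩ := (π 0).support_nonempty
  refine Measure.ext_of_singleton fun b => ?_
  set b' : ℕ → β := fun i => if hi : i ∈ range n then b ⟨i, hi⟩ else b₀
  have hpre : (fun ω (i : range n) => Y i ω) ⁻¹' {b} = {ω | ∀ i < n, Y i ω = b' i} := by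
    ext ω
    simp only [Set.mem_preimage, Set.mem_singleton_iff, funext_iff, Subtype.forall, mem_range,
      Set.mem_ofPred_eq, b']
    exact forall₂_congr fun i hi => by rw [dif_pos hi]
  rw [Measure.map_apply (measurable_pi_lambda (fun ω (i : range n) => Y i ω) fun i => hY i)
    (measurableSet_singleton b), Measure.pi_singleton, hpre, h, ← prod_coe_sort]
  exact prod_congr rfl fun i _ => by
    simp only [b', dif_pos i.2, PMF.toMeasure_apply_singleton _ _ (measurableSet_singleton _)]

lemma map_restrict_eq_pi_of_cylinder (hY : ∀ i, Measurable (Y i))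
    (h : ∀ n (b : ℕ → β), μ {ω | ∀ i < n, Y i ω = b i} = ∏ i ∈ range n, π i (b i))
    (s : Finset ℕ) :
    μ.map (fun ω (i : s) => Y i ω) = Measure.pi fun i : s => (π i).toMeasure := by
  obtain ⟨n, hs⟩ : ∃ n, s ⊆ range n :=
    ⟨s.sup id + 1, fun i hi => mem_range.2 (Nat.lt_succ_of_le (le_sup (f := id) hi))⟩
  refine Eq.trans ?_ (isProjectiveMeasureFamily_pi (fun i => (π i).toMeasure) (range n) s hs).symm
  beta_reduce
  rw [← map_range_eq_pi_of_cylinder hY h n, Measure.map_map (by fun_prop) (by fun_prop)]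
  rfl

lemma map_eq_toMeasure_of_cylinder (hY : ∀ i, Measurable (Y i))
    (h : ∀ n (b : ℕ → β), μ {ω | ∀ i < n, Y i ω = b i} = ∏ i ∈ range n, π i (b i)) (i : ℕ) :
    μ.map (Y i) = (π i).toMeasure := by
  have := congrArg (Measure.map (Function.eval ⟨i, mem_singleton_self i⟩))
    (map_restrict_eq_pi_of_cylinder hY h {i})
  rwa [Measure.map_map (measurable_pi_apply _)
    (measurable_pi_lambda (fun ω (j : ({i} : Finset ℕ)) => Y j ω) fun j => hY j),
    (measurePreserving_eval _ _).map_eq] at this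

theorem iIndepFun_of_cylinder [IsProbabilityMeasure μ] (hY : ∀ i, Measurable (Y i))
    (h : ∀ n (b : ℕ → β), μ {ω | ∀ i < n, Y i ω = b i} = ∏ i ∈ range n, π i (b i)) :
    iIndepFun Y μ := by
  refine iIndepFun_iff_finset.2 fun s =>
    (iIndepFun_iff_map_fun_eq_pi_map fun i : s => (hY i).aemeasurable).2 ?_
  simp only [map_eq_toMeasure_of_cylinder hY h]
  exact map_restrict_eq_pi_of_cylinder hY h s

end CylinderLaw

section DualOffspring

variable {Ω : Type*} [MeasurableSpace Ω] {μ : Measure Ω} {X : ℕ → Ω → ℕ} {p q : ℝ≥0∞}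

lemma ae_exists_le_sum_range (hXm : ∀ i, Measurable (X i)) (hX : iIndepFun X μ)
    (hsum : ∑' i, μ {ω | X i ω ≠ 0} = ∞) : ∀ᵐ ω ∂μ, ∀ k, ∃ y, k ≤ ∑ i ∈ range y, X i ω := by
  have hmeas : ∀ i, MeasurableSet {ω | X i ω ≠ 0} :=
    fun i => (hXm i) (measurableSet_singleton 0).compl
  have hind : iIndepSet (fun i => {ω | X i ω ≠ 0}) μ :=
    (iIndepSet_iff_meas_biInter hmeas).2 fun _ =>
      hX.meas_biInter fun _ _ => ⟨{0}ᶜ, (measurableSet_singleton 0).compl, rfl⟩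
  have := hind.isProbabilityMeasure
  have hae : ∀ᵐ ω ∂μ, ω ∈ limsup (fun i => {ω | X i ω ≠ 0}) atTop :=
    (ae_mem_iff_measure_eq (MeasurableSet.measurableSet_limsup hmeas).nullMeasurableSet).2
      (by rw [measure_limsup_eq_one hmeas hind hsum, measure_univ])
  filter_upwards [hae] with ω hω
  exact exists_le_sum_range_of_frequently_ne_zero_s14 (mem_limsup_iff_frequently_mem.1 hω)

lemma measurable_dualOffspring (hXm : ∀ i, Measurable (X i)) (j : ℕ) :
    Measurable fun ω => dualOffspring (X · ω) j := by
  have hS : ∀ y, Measurable fun ω => ∑ i ∈ range y, X i ω :=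
    fun y => Finset.measurable_sum _ fun i _ => hXm i
  exact (measurable_firstPassage hS (fun ω => monotone_sum_range _) (j + 1)).sub
    (measurable_firstPassage hS (fun ω => monotone_sum_range _) j)

variable [IsProbabilityMeasure μ]

theorem measure_isDualPrefix (hp0 : 0 < p) (hp1 : p ≤ 1) (hXm : ∀ i, Measurable (X i))
    (hX : iIndepFun X μ) (hlaw : ∀ i k, μ {ω | X i ω = k} = linFrac p q k) (n : ℕ) (a : ℕ → ℕ) :
    μ {ω | IsDualPrefix (X · ω) a n} = ∏ j ∈ range n, dualLaw p q j (a j) := by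
  rcases n with _ | n
  · simp [isDualPrefix_zero]
  by_cases ha : a 0 = 0
  · rw [prod_eq_zero (mem_range.2 n.succ_pos) (by simp [ha, dualLaw, linFrac])]
    simp [not_isDualPrefix_of_eq_zero ha n.succ_ne_zero]
  choose e he hprod using exists_cylinder_isDualPrefix (p := p) (q := q) ha n
  set E : ℕ → Set Ω := fun m => {ω | IsDualPrefix (X · ω) a (n + 1) ∧
    ∑ i ∈ range (∑ j ∈ range (n + 1), a j), X i ω = n + 1 + m}
  have hE : ∀ m, E m = {ω | ∀ i < ∑ j ∈ range (n + 1), a j, X i ω = e m i} :=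
    fun m => Set.ext fun ω => he m (X · ω)
  have hunion : {ω | IsDualPrefix (X · ω) a (n + 1)} = ⋃ m, E m := by
    ext ω
    simp only [Set.mem_iUnion, E, Set.mem_ofPred_eq]
    exact ⟨fun h => ⟨_, h, (Nat.add_sub_cancel' h.le_sum).symm⟩, fun ⟨_, h, _⟩ => h⟩
  have hdisj : Pairwise (Function.onFun Disjoint E) := fun m m' hm =>
    Set.disjoint_left.2 fun ω h h' => hm (by simp only [E, Set.mem_ofPred_eq] at h h'; omega)
  have hmeasE : ∀ m, MeasurableSet (E m) := fun m => by
    rw [hE]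
    simp only [Set.ofPred_forall]
    exact .iInter fun i => .iInter fun _ => hXm i (measurableSet_singleton _)
  rw [hunion, measure_iUnion hdisj hmeasE]
  simp_rw [hE, hX.measure_forall_lt_eq, hlaw, hprod]
  rw [ENNReal.tsum_mul_left, tsum_one_sub_pow_mul_self hp0 hp1, mul_one]

theorem iIndepFun_dualOffspring_and_law (hp0 : 0 < p) (hp1 : p ≤ 1) (hq0 : 0 < q) (hq1 : q ≤ 1)
    (hXm : ∀ i, Measurable (X i)) (hX : iIndepFun X μ)
    (hlaw : ∀ i k, μ {ω | X i ω = k} = linFrac p q k) :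
    iIndepFun (fun j ω => dualOffspring (X · ω) j) μ ∧
      ∀ j k, μ {ω | dualOffspring (X · ω) j = k} = dualLaw p q j k := by
  let π : ℕ → PMF ℕ := fun j => ⟨dualLaw p q j, hasSum_dualLaw hp1 hq0 hq1 j⟩
  have hne : ∀ i, μ {ω | X i ω ≠ 0} = q := fun i => by
    rw [← Set.compl_ofPred,
      prob_compl_eq_one_sub (s := {ω | X i ω = 0}) ((hXm i) (measurableSet_singleton 0)),
      hlaw, linFrac, ENNReal.sub_sub_cancel ENNReal.one_ne_top hq1]
  have hunb := ae_exists_le_sum_range hXm hX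
    (by simp_rw [hne]; exact ENNReal.tsum_const_eq_top_of_ne_zero hq0.ne')
  have hcyl : ∀ n (b : ℕ → ℕ), μ {ω | ∀ j < n, dualOffspring (X · ω) j = b j} =
      ∏ j ∈ range n, π j (b j) := fun n b => by
    change _ = ∏ j ∈ range n, dualLaw p q j (b j)
    rw [← measure_isDualPrefix hp0 hp1 hXm hX hlaw n b]
    exact measure_congr (hunb.mono fun ω hω => propext (isDualPrefix_iff hω).symm)
  refine ⟨iIndepFun_of_cylinder (measurable_dualOffspring hXm) hcyl, fun j k => ?_⟩
  have := congrArg (· {k}) (map_eq_toMeasure_of_cylinder (measurable_dualOffspring hXm) hcyl j)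
  rwa [Measure.map_apply (measurable_dualOffspring hXm j) (measurableSet_singleton k),
    PMF.toMeasure_apply_singleton _ _ (measurableSet_singleton k)] at this

end DualOffspring

/-- If the primary i.i.d. reproduction law is linear-fractional with parameters
`p, q ∈ (0,1]`, i.e. `P(u(1)=0) = 1 - q` and `P(u(1)=k) = q(1-p)^{k-1}p` for
`k ≥ 1`, then the dual offspring numbers `v(1), v(2), …` are mutually independent,
`P(v(1)=k) = (1-q)^{k-1}q` for `k ≥ 1`, and for `x ≥ 2`: `P(v(x)=0) = 1-p`,
`P(v(x)=k) = p(1-q)^{k-1}q` for `k ≥ 1`. In particular the dual is a GW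
reproduction with an eternal particle: `v(1) ≥ 1` a.s. and `v(2), v(3), …` are
identically distributed. -/
theorem stmt_14 {Ω : Type*} [MeasurableSpace Ω] (μ : Measure Ω) [IsProbabilityMeasure μ]
    (p q : ℝ≥0∞) (hp0 : 0 < p) (hp1 : p ≤ 1) (hq0 : 0 < q) (hq1 : q ≤ 1)
    (u : ℕ → Ω → ℕ) (hmeas : ∀ x : ℕ, Measurable (u x))
    (hindep : iIndepFun (fun n : ℕ => u (n + 1)) μ)
    (hdist0 : ∀ x : ℕ, 1 ≤ x → μ {ω | u x ω = 0} = 1 - q)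
    (hdistk : ∀ x : ℕ, 1 ≤ x → ∀ k : ℕ, 1 ≤ k →
      μ {ω | u x ω = k} = q * (1 - p) ^ (k - 1) * p)
    (U : Ω → ℕ → ℕ) (hU : ∀ ω : Ω, ∀ x : ℕ, U ω x = ∑ i ∈ Finset.Icc 1 x, u i ω)
    (V : Ω → ℕ → ℕ) (hV : ∀ ω : Ω, ∀ x : ℕ, V ω x = sInf {y : ℕ | x ≤ U ω y})
    (v : ℕ → Ω → ℕ) (hv : ∀ x : ℕ, 1 ≤ x → ∀ ω : Ω, v x ω = V ω x - V ω (x - 1)) :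
    iIndepFun (fun n : ℕ => v (n + 1)) μ ∧
    (∀ k : ℕ, 1 ≤ k → μ {ω | v 1 ω = k} = (1 - q) ^ (k - 1) * q) ∧
    (∀ x : ℕ, 2 ≤ x → μ {ω | v x ω = 0} = 1 - p ∧
      ∀ k : ℕ, 1 ≤ k → μ {ω | v x ω = k} = p * (1 - q) ^ (k - 1) * q) ∧
    μ {ω | 1 ≤ v 1 ω} = 1 ∧
    (∀ x y : ℕ, 2 ≤ x → 2 ≤ y → ∀ k : ℕ, μ {ω | v x ω = k} = μ {ω | v y ω = k}) := by
  have hlaw : ∀ i k, μ {ω | u (i + 1) ω = k} = linFrac p q k := by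
    rintro i (_ | k)
    · exact hdist0 (i + 1) i.succ_pos
    · simpa [linFrac] using hdistk (i + 1) i.succ_pos (k + 1) k.succ_pos
  have hvdual : ∀ j, v (j + 1) = fun ω => dualOffspring (fun i => u (i + 1) ω) j :=
    fun j => funext fun ω => by
      rw [hv (j + 1) j.succ_pos, hV, hV, add_tsub_cancel_right]
      simp only [hU]
      exact (dualOffspring_eq_sInf_sub_sInf (fun i => u i ω) j).symm
  obtain ⟨hindv, hlawv⟩ := iIndepFun_dualOffspring_and_law hp0 hp1 hq0 hq1
    (fun i => hmeas (i + 1)) hindep hlaw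
  rw [← funext hvdual] at hindv
  replace hlawv : ∀ j k, μ {ω | v (j + 1) ω = k} = dualLaw p q j k :=
    fun j k => hvdual j ▸ hlawv j k
  have hlaw_ge_two : ∀ x, 2 ≤ x → ∀ k, μ {ω | v x ω = k} = linFrac q p k := fun x hx k => by
    obtain ⟨j, rfl⟩ : ∃ j, x = j + 1 + 1 := ⟨x - 2, by omega⟩
    exact hlawv (j + 1) k
  refine ⟨hindv, fun k hk => ?_, fun x hx => ⟨hlaw_ge_two x hx 0, fun k hk => ?_⟩, ?_,
    fun x y hx hy k => by rw [hlaw_ge_two x hx, hlaw_ge_two y hy]⟩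
  · obtain ⟨k, rfl⟩ := Nat.exists_eq_add_one_of_ne_zero (Nat.one_le_iff_ne_zero.1 hk)
    simp [hlawv 0, dualLaw, linFrac]
  · obtain ⟨k, rfl⟩ := Nat.exists_eq_add_one_of_ne_zero (Nat.one_le_iff_ne_zero.1 hk)
    simp [hlaw_ge_two x hx, linFrac]
  · have hv1 : {ω | 1 ≤ v 1 ω}ᶜ = {ω | v 1 ω = 0} := by
      ext ω
      simp [Nat.one_le_iff_ne_zero]
    rw [measure_congr (ae_eq_univ.2 (by rw [hv1, hlawv 0 0]; simp [dualLaw, linFrac])),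
      measure_univ]
end
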